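/- Let H be a Hopf algebra, B a left coideal subalgebra, and ζ : H → B a unitary convolution-invertible left B-module map with convolution inverse ζ̄ satisfying ε(ζ̄(ι(b)h)) = ε(b)ε(ζ̄(h)). Define ζ''(h) = Σ ζ(h₍₁₎)·ε(ζ̄(h₍₂₎)). Then ζ'' is a biunitary (unitary and counitary) left B-module map with convolution inverse ζ̄''(h) = Σ ε(ζ(h₍₁₎))·ζ̄(h₍₂₎). -/

import Mathlib

/-!
Write `e = η_B ∘ ε_B : B → B`, an algebra map, and `u = e ∘ ζ̄`, so that `ζ'' = ζ * u` in the
convolution algebra. Post-composition with an algebra map is multiplicative for convolution, so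
`u` is convolution-invertible with inverse `e ∘ ζ`, and `ζ''` has inverse `(e ∘ ζ) * ζ̄ = ζ̄''`.
Since `ε_B ∘ e = ε_B`, the same principle gives `ε_B ∘ ζ'' = ε_B ∘ (ζ * ζ̄) = ε`.
For `B`-linearity, `Δ b = b₍₁₎ ⊗ b₍₂₎` has `b₍₂₎ ∈ B`, where the hypothesis on `ζ̄` gives
`u (b₍₂₎ h) = ε(b₍₂₎) u h`; hence
`ζ''(b h) = Σ ζ(b₍₁₎h₍₁₎) u(b₍₂₎h₍₂₎) = Σ ζ(b₍₁₎ε(b₍₂₎) h₍₁₎) u(h₍₂₎) = b ζ''(h)`.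
-/

open TensorProduct

noncomputable def convMap (k : Type*) {H M : Type*} [CommSemiring k]
    [AddCommMonoid H] [Module k H] [Coalgebra k H] [Semiring M] [Algebra k M]
    (f g : H →ₗ[k] M) : H →ₗ[k] M :=
  LinearMap.mul' k M ∘ₗ TensorProduct.map f g ∘ₗ Coalgebra.comul

open Coalgebra WithConv

/- `convMap k f g` is by definition the product `toConv f * toConv g` in Mathlib's convolution
algebra `WithConv (H →ₗ[k] M)`, whose API the lemmas below transport. -/
section Convolution

variable {k H M : Type*} [CommSemiring k] [AddCommMonoid H] [Module k H] [Coalgebra k H]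
  [Semiring M] [Algebra k M]

lemma Coalgebra.Repr.convMap_apply {a : H} {ι : Type*} (r : Coalgebra.Repr k a ι)
    (f g : H →ₗ[k] M) : convMap k f g a = ∑ i ∈ r.index, f (r.left i) * g (r.right i) :=
  r.convMul_apply (toConv f) (toConv g)

lemma algHom_comp_convMap {M' : Type*} [Semiring M'] [Algebra k M'] (φ : M →ₐ[k] M')
    (f g : H →ₗ[k] M) :
    φ.toLinearMap ∘ₗ convMap k f g = convMap k (φ.toLinearMap ∘ₗ f) (φ.toLinearMap ∘ₗ g) :=
  LinearMap.algHom_comp_convMul_distrib φ (toConv f) (toConv g)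

lemma convMap_algHom_comp_eq_unit {M' : Type*} [Semiring M'] [Algebra k M'] (φ : M →ₐ[k] M')
    {f g : H →ₗ[k] M} (hfg : convMap k f g = Algebra.linearMap k M ∘ₗ counit) :
    convMap k (φ.toLinearMap ∘ₗ f) (φ.toLinearMap ∘ₗ g) = Algebra.linearMap k M' ∘ₗ counit := by
  rw [← algHom_comp_convMap, hfg]
  ext x
  simp

def convUnit {f g : H →ₗ[k] M}
    (hfg : convMap k f g = Algebra.linearMap k M ∘ₗ counit)
    (hgf : convMap k g f = Algebra.linearMap k M ∘ₗ counit) : (WithConv (H →ₗ[k] M))ˣ :=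
  ⟨toConv f, toConv g, congrArg toConv hfg, congrArg toConv hgf⟩

end Convolution

lemma convMap_apply_one {k H M : Type*} [CommSemiring k] [Semiring H] [Bialgebra k H]
    [Semiring M] [Algebra k M] (f g : H →ₗ[k] M) : convMap k f g 1 = f 1 * g 1 := by
  simp [convMap, Algebra.TensorProduct.one_def]

namespace Subalgebra

variable {k H : Type*} [CommSemiring k] [Semiring H] [Bialgebra k H] (B : Subalgebra k H)

noncomputable def counitAlgHom : B →ₐ[k] k := (Bialgebra.counitAlgHom k H).comp B.val

@[simp]
lemma counitAlgHom_apply (b : B) : B.counitAlgHom b = counit (R := k) (b : H) := rfl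

noncomputable def unitCounit : B →ₐ[k] B := (Algebra.ofId k B).comp B.counitAlgHom

lemma counitAlgHom_comp_unitCounit : B.counitAlgHom.comp B.unitCounit = B.counitAlgHom := by
  ext b
  simp [unitCounit, counitAlgHom]

variable {B}

lemma exists_repr_right_mem_of_comul_mem_range {b : H}
    (hb : comul b ∈ LinearMap.range (TensorProduct.map LinearMap.id B.val.toLinearMap)) :
    ∃ r : Coalgebra.Repr k b (H × B), ∀ i, r.right i ∈ B := by
  obtain ⟨t, ht⟩ := hb
  obtain ⟨s, rfl⟩ := TensorProduct.exists_finset t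
  exact ⟨⟨s, Prod.fst, fun p => p.2, by simpa [map_sum] using ht⟩, fun p => p.2.2⟩

end Subalgebra

section CoidealSubalgebra

variable {k H : Type*} [CommSemiring k] [Semiring H] [Bialgebra k H] {B : Subalgebra k H}

lemma unitCounit_comp_apply_coe_mul {g : H →ₗ[k] B}
    (hg : ∀ (b : B) (h : H),
      counit (R := k) (g ((b : H) * h) : H) = counit (R := k) (b : H) * counit (R := k) (g h : H))
    (b : B) (h : H) :
    (B.unitCounit.toLinearMap ∘ₗ g) ((b : H) * h)
      = counit (R := k) (b : H) • (B.unitCounit.toLinearMap ∘ₗ g) h := by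
  simp [Subalgebra.unitCounit, hg, Algebra.smul_def]

lemma counit_convMap_unitCounit_comp {f g : H →ₗ[k] B}
    (hfg : convMap k f g = Algebra.linearMap k B ∘ₗ counit) (h : H) :
    counit (R := k) (convMap k f (B.unitCounit.toLinearMap ∘ₗ g) h : H) = counit h := by
  have hε : B.counitAlgHom.toLinearMap ∘ₗ convMap k f (B.unitCounit.toLinearMap ∘ₗ g)
      = Algebra.linearMap k k ∘ₗ counit := by
    rw [algHom_comp_convMap, ← LinearMap.comp_assoc, ← AlgHom.comp_toLinearMap,
      B.counitAlgHom_comp_unitCounit]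
    exact convMap_algHom_comp_eq_unit _ hfg
  simpa using LinearMap.congr_fun hε h

lemma convMap_apply_coe_mul_of_comul_mem_range (f g : H →ₗ[k] B)
    (hf : ∀ (b : B) (h : H), f ((b : H) * h) = b * f h)
    (hg : ∀ (b : B) (h : H), g ((b : H) * h) = counit (R := k) (b : H) • g h) {b : B}
    (hb : comul (b : H) ∈ LinearMap.range (TensorProduct.map LinearMap.id B.val.toLinearMap))
    (h : H) : convMap k f g ((b : H) * h) = b * convMap k f g h := by
  obtain ⟨r, hr⟩ := Subalgebra.exists_repr_right_mem_of_comul_mem_range hb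
  have hb_eq : ∑ i ∈ r.index, counit (R := k) (r.right i) • r.left i = (b : H) := by
    simpa only [map_sum, TensorProduct.rid_tmul, one_smul] using
      congr(TensorProduct.rid k H $(sum_tmul_counit_eq r))
  rw [(r.mul (ℛ k h)).convMap_apply, (ℛ k h).convMap_apply, Coalgebra.Repr.mul_index,
    Finset.sum_product_right, Finset.mul_sum]
  refine Finset.sum_congr rfl fun j _ => ?_
  calc ∑ i ∈ r.index, f ((r.mul (ℛ k h)).left (i, j)) * g ((r.mul (ℛ k h)).right (i, j))
      = ∑ i ∈ r.index, f ((counit (R := k) (r.right i) • r.left i) * (ℛ k h).left j)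
          * g ((ℛ k h).right j) := by
        refine Finset.sum_congr rfl fun i _ => ?_
        rw [Coalgebra.Repr.mul_left, Coalgebra.Repr.mul_right, hg ⟨_, hr i⟩, smul_mul_assoc,
          map_smul, mul_smul_comm, smul_mul_assoc]
    _ = f ((b : H) * (ℛ k h).left j) * g ((ℛ k h).right j) := by
        rw [← Finset.sum_mul, ← map_sum, ← Finset.sum_mul, hb_eq]
    _ = b * (f ((ℛ k h).left j) * g ((ℛ k h).right j)) := by rw [hf, mul_assoc]

end CoidealSubalgebra

theorem stmt5 {k H : Type*} [Field k] [Ring H] [HopfAlgebra k H]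
    (B : Subalgebra k H)
    -- B is a left coideal subalgebra: Δ(B) ⊆ H ⊗ B
    (hB : ∀ b : B, Coalgebra.comul (b : H) ∈
      LinearMap.range (TensorProduct.map (LinearMap.id : H →ₗ[k] H) B.val.toLinearMap))
    (ζ ζbar : H →ₗ[k] B)
    -- ζ is a unitary left B-module map
    (hζ1 : ζ 1 = 1)
    (hζmod : ∀ (b : B) (h : H), ζ ((b : H) * h) = b * ζ h)
    -- ζ̄ is the convolution inverse of ζ
    (hinv₁ : convMap k ζ ζbar =
      (Algebra.linearMap k B) ∘ₗ (Coalgebra.counit : H →ₗ[k] k))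
    (hinv₂ : convMap k ζbar ζ =
      (Algebra.linearMap k B) ∘ₗ (Coalgebra.counit : H →ₗ[k] k))
    -- ε(ζ̄(ι(b)h)) = ε(b)ε(ζ̄(h))
    (hεζbar : ∀ (b : B) (h : H),
      Coalgebra.counit (R := k) ((ζbar ((b : H) * h) : H))
        = Coalgebra.counit (R := k) (b : H) * Coalgebra.counit (R := k) ((ζbar h : H))) :
    -- ζ'' := Σ ζ(h₍₁₎)·ε(ζ̄(h₍₂₎)) = convMap ζ (η∘ε∘ζ̄),  ζ̄'' := convMap (η∘ε∘ζ) ζ̄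
    (convMap k ζ ((Algebra.linearMap k B) ∘ₗ (Coalgebra.counit : H →ₗ[k] k) ∘ₗ
        B.val.toLinearMap ∘ₗ ζbar)) 1 = 1 ∧
    (∀ h : H,
      Coalgebra.counit (R := k)
        (((convMap k ζ ((Algebra.linearMap k B) ∘ₗ (Coalgebra.counit : H →ₗ[k] k) ∘ₗ
            B.val.toLinearMap ∘ₗ ζbar)) h : H))
        = Coalgebra.counit (R := k) h) ∧
    (∀ (b : B) (h : H),
      (convMap k ζ ((Algebra.linearMap k B) ∘ₗ (Coalgebra.counit : H →ₗ[k] k) ∘ₗ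
          B.val.toLinearMap ∘ₗ ζbar)) ((b : H) * h)
        = b * (convMap k ζ ((Algebra.linearMap k B) ∘ₗ (Coalgebra.counit : H →ₗ[k] k) ∘ₗ
            B.val.toLinearMap ∘ₗ ζbar)) h) ∧
    convMap k
        (convMap k ζ ((Algebra.linearMap k B) ∘ₗ (Coalgebra.counit : H →ₗ[k] k) ∘ₗ
          B.val.toLinearMap ∘ₗ ζbar))
        (convMap k ((Algebra.linearMap k B) ∘ₗ (Coalgebra.counit : H →ₗ[k] k) ∘ₗ
          B.val.toLinearMap ∘ₗ ζ) ζbar)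
      = (Algebra.linearMap k B) ∘ₗ (Coalgebra.counit : H →ₗ[k] k) ∧
    convMap k
        (convMap k ((Algebra.linearMap k B) ∘ₗ (Coalgebra.counit : H →ₗ[k] k) ∘ₗ
          B.val.toLinearMap ∘ₗ ζ) ζbar)
        (convMap k ζ ((Algebra.linearMap k B) ∘ₗ (Coalgebra.counit : H →ₗ[k] k) ∘ₗ
          B.val.toLinearMap ∘ₗ ζbar))
      = (Algebra.linearMap k B) ∘ₗ (Coalgebra.counit : H →ₗ[k] k) := by
  have hu : Algebra.linearMap k B ∘ₗ (counit : H →ₗ[k] k) ∘ₗ B.val.toLinearMap ∘ₗ ζbar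
      = B.unitCounit.toLinearMap ∘ₗ ζbar := rfl
  have hv : Algebra.linearMap k B ∘ₗ (counit : H →ₗ[k] k) ∘ₗ B.val.toLinearMap ∘ₗ ζ
      = B.unitCounit.toLinearMap ∘ₗ ζ := rfl
  rw [hu, hv]
  have hζbar1 : ζbar 1 = 1 := by
    simpa [convMap_apply_one, hζ1] using LinearMap.congr_fun hinv₁ 1
  let Z := convUnit hinv₁ hinv₂
  let U := convUnit (convMap_algHom_comp_eq_unit B.unitCounit hinv₂)
    (convMap_algHom_comp_eq_unit B.unitCounit hinv₁)
  -- Definitionally, `Z * U` is `ζ''` and `(Z * U)⁻¹ = U⁻¹ * Z⁻¹` is `ζ̄''`.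
  exact ⟨by simp [convMap_apply_one, hζ1, hζbar1], counit_convMap_unitCounit_comp hinv₁,
    fun b h => convMap_apply_coe_mul_of_comul_mem_range _ _ hζmod
      (unitCounit_comp_apply_coe_mul hεζbar) (hB b) h,
    congrArg ofConv (Z * U).mul_inv, congrArg ofConv (Z * U).inv_mul⟩
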